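/- arXiv:2101.03108 — 4 statements merged into one kernel-verified Lean document; each statement's English description precedes it below -/
import Mathlib

section
/- Let K be an n×n symmetric positive definite real matrix, z ∈ ℝⁿ, and i a nonempty proper subset of {1,…,n}. Define the Kriging residual E_i := z_i - K[i,-i] K[-i]⁻¹ z_{-i}. Then E_i = (K⁻¹[i])⁻¹ (K⁻¹ z)_i, where (K⁻¹ z)_i is the subvector of K⁻¹z indexed by i. -/
open Matrix

/-- Submatrix of `M` with rows indexed by `i` and columns by `j` (as finsets). -/
noncomputable def blk {n : ℕ} (M : Matrix (Fin n) (Fin n) ℝ) (i j : Finset (Fin n)) :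
    Matrix {x // x ∈ i} {x // x ∈ j} ℝ :=
  M.submatrix Subtype.val Subtype.val

/-- Subvector of `z` indexed by the finset `i`. -/
def subvec {n : ℕ} (z : Fin n → ℝ) (i : Finset (Fin n)) : {x // x ∈ i} → ℝ :=
  fun a => z a.val

lemma posDef_submatrix_inj {m l : Type*} [Fintype m] [Fintype l]
    {M : Matrix m m ℝ} (hM : M.PosDef) (e : l → m) (he : Function.Injective e) :
    (M.submatrix e e).PosDef := by
  refine Matrix.PosDef.of_dotProduct_mulVec_pos ?_ ?_
  · exact hM.1.submatrix e
  · intro x hx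
    set y : m → ℝ := Function.extend e x 0 with hy
    have hye : ∀ a, y (e a) = x a := fun a => he.extend_apply x 0 a
    have hy0 : ∀ j, j ∉ Set.range e → y j = 0 := by
      intro j hj
      simp [hy, Function.extend_apply' _ _ _ hj]
    have key : ∀ f : m → ℝ, (∀ j, j ∉ Set.range e → f j = 0) →
        ∑ j, f j = ∑ a, f (e a) := by
      intro f hf
      classical
      rw [← Finset.sum_image (g := e) (f := f) (fun a _ b _ h => he h)]
      refine (Finset.sum_subset (Finset.subset_univ _) ?_).symm
      intro j _ hj
      refine hf j ?_
      rintro ⟨a, rfl⟩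
      exact hj (Finset.mem_image.2 ⟨a, Finset.mem_univ a, rfl⟩)
    have hdot : star x ⬝ᵥ (M.submatrix e e) *ᵥ x = star y ⬝ᵥ M *ᵥ y := by
      simp only [dotProduct, mulVec, star, Pi.star_apply, star_trivial, id]
      rw [key (fun j => y j * ∑ k, M j k * y k)
        (fun j hj => by rw [hy0 j hj, zero_mul])]
      refine Finset.sum_congr rfl fun a _ => ?_
      rw [hye]
      congr 1
      rw [key (fun k => M (e a) k * y k) (fun k hk => by rw [hy0 k hk, mul_zero])]
      refine Finset.sum_congr rfl fun b _ => ?_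
      rw [hye]
      rfl
    rw [hdot]
    apply hM.dotProduct_mulVec_pos
    intro h0
    apply hx
    funext a
    have := congrFun h0 (e a)
    rwa [hye] at this

/-- Fast cross-validation formula for the Simple Kriging residual:
`z_i - K[i,-i] K[-i]⁻¹ z_{-i} = (K⁻¹[i])⁻¹ (K⁻¹ z)_i`. -/
theorem kriging_residual_fast_formula {n : ℕ}
    (K : Matrix (Fin n) (Fin n) ℝ) (hK : K.PosDef)
    (z : Fin n → ℝ)
    (i : Finset (Fin n)) (hi : i.Nonempty) (hiproper : i ≠ Finset.univ) :
    subvec z i - (blk K i iᶜ).mulVec ((blk K iᶜ iᶜ)⁻¹.mulVec (subvec z iᶜ)) =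
      (blk K⁻¹ i i)⁻¹.mulVec (subvec (K⁻¹.mulVec z) i) := by
  classical
  -- the reindexing equivalence
  let e : ({x // x ∈ i} ⊕ {x // x ∈ iᶜ}) ≃ Fin n :=
    (Equiv.sumCongr (Equiv.refl _)
      (Equiv.subtypeEquivRight (fun x => Finset.mem_compl))).trans
      (Equiv.sumCompl (· ∈ i))
  have he_inl : ∀ a : {x // x ∈ i}, e (Sum.inl a) = a.val := fun a => rfl
  have he_inr : ∀ a : {x // x ∈ iᶜ}, e (Sum.inr a) = a.val := fun a => rfl
  set A := blk K i i with hA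
  set B := blk K i iᶜ with hB
  set C := blk K iᶜ i with hC
  set D := blk K iᶜ iᶜ with hD
  have hKe : K.submatrix e e = fromBlocks A B C D := by
    ext (a | a) (b | b) <;> rfl
  have hze : (z ∘ e) = Sum.elim (subvec z i) (subvec z iᶜ) := by
    funext a
    cases a <;> rfl
  -- positive definiteness of the pieces
  have hKe_pd : (K.submatrix e e).PosDef := posDef_submatrix_inj hK e e.injective
  have hD_pd : D.PosDef := posDef_submatrix_inj hK _ Subtype.val_injective
  have hFB_pd : (fromBlocks A B C D).PosDef := hKe ▸ hKe_pd
  haveI : Invertible D := hD_pd.isUnit.invertible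
  haveI : Invertible (fromBlocks A B C D) := hFB_pd.isUnit.invertible
  haveI hSinv : Invertible (A - B * ⅟D * C) :=
    invertibleOfFromBlocks₂₂Invertible A B C D
  set S := A - B * ⅟D * C with hS
  -- the inverse of the reindexed matrix
  have hinv : (K⁻¹).submatrix e e = (fromBlocks A B C D)⁻¹ := by
    rw [← hKe, ← Matrix.inv_submatrix_equiv]
  have hinv_blocks : (fromBlocks A B C D)⁻¹ =
      fromBlocks (⅟S) (-(⅟S * B * ⅟D)) (-(⅟D * C * ⅟S)) (⅟D + ⅟D * C * ⅟S * B * ⅟D) := by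
    rw [← invOf_eq_nonsing_inv, invOf_fromBlocks₂₂_eq]
  -- identify blk K⁻¹ i i
  have hblk_inv : blk K⁻¹ i i = ⅟S := by
    have : blk K⁻¹ i i = ((K⁻¹).submatrix e e).toBlocks₁₁ := by
      ext a b
      simp [blk, Matrix.toBlocks₁₁, Matrix.submatrix_apply, he_inl]
    rw [this, hinv, hinv_blocks]
    rfl
  -- identify subvec (K⁻¹ *ᵥ z) i
  have hKz : (K⁻¹ *ᵥ z) ∘ e = ((fromBlocks A B C D)⁻¹) *ᵥ (Sum.elim (subvec z i) (subvec z iᶜ)) := by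
    rw [← hinv, ← hze, Matrix.submatrix_mulVec_equiv,
      show (z ∘ e) ∘ ⇑e.symm = z from funext (fun k => by simp)]
  have hsub : subvec (K⁻¹ *ᵥ z) i =
      ⅟S *ᵥ subvec z i + (-(⅟S * B * ⅟D)) *ᵥ subvec z iᶜ := by
    funext a
    have := congrFun hKz (Sum.inl a)
    simp only [Function.comp_apply, he_inl] at this
    rw [hinv_blocks] at this
    rw [Matrix.fromBlocks_mulVec] at this
    have hl : (Sum.elim (subvec z i) (subvec z iᶜ)) ∘ Sum.inl = subvec z i := rfl
    have hr : (Sum.elim (subvec z i) (subvec z iᶜ)) ∘ Sum.inr = subvec z iᶜ := rfl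
    rw [hl, hr] at this
    exact this
  -- now finish
  rw [hblk_inv, hsub]
  have hDinv : D⁻¹ = ⅟D := (invOf_eq_nonsing_inv D).symm
  rw [Matrix.mulVec_add, show ((⅟S)⁻¹ : Matrix _ _ ℝ) = S from by
    rw [← invOf_eq_nonsing_inv]; exact invOf_invOf S]
  simp only [Matrix.neg_mulVec, Matrix.mulVec_neg]
  have h1 : S *ᵥ ⅟S *ᵥ subvec z i = subvec z i := by
    rw [Matrix.mulVec_mulVec, mul_invOf_self, Matrix.one_mulVec]
  have h2 : S *ᵥ (⅟S * B * ⅟D) *ᵥ subvec z iᶜ = B *ᵥ D⁻¹ *ᵥ subvec z iᶜ := by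
    rw [Matrix.mulVec_mulVec, Matrix.mul_assoc (⅟S) B (⅟D), ← Matrix.mul_assoc S (⅟S) (B * ⅟D), mul_invOf_self, Matrix.one_mul,
      hDinv, ← Matrix.mulVec_mulVec]
  rw [h1, h2, sub_eq_add_neg]
end

section
/- Let Z be a centred Gaussian vector in ℝⁿ with covariance matrix K symmetric positive definite. For nonempty proper subsets i, j of {1,…,n}, the cross-validation residuals E_i = (K⁻¹[i])⁻¹(K⁻¹Z)_i and E_j = (K⁻¹[j])⁻¹(K⁻¹Z)_j satisfy Cov(E_i, E_j) = (K⁻¹[i])⁻¹ K⁻¹[i,j] (K⁻¹[j])⁻¹. -/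
open Matrix MeasureTheory

/-- Cross-validation residual on the fold `i`: `E_i = (K⁻¹[i])⁻¹ (K⁻¹ z)_i`. -/
noncomputable def cvRes {n : ℕ} (K : Matrix (Fin n) (Fin n) ℝ) (i : Finset (Fin n))
    (z : Fin n → ℝ) : {x // x ∈ i} → ℝ :=
  (blk K⁻¹ i i)⁻¹.mulVec (subvec (K⁻¹.mulVec z) i)

lemma cvRes_eq_mulVec {n : ℕ} (K : Matrix (Fin n) (Fin n) ℝ) (i : Finset (Fin n))
    (z : Fin n → ℝ) :
    cvRes K i z = ((blk K⁻¹ i i)⁻¹ * (K⁻¹.submatrix Subtype.val id : Matrix {x // x ∈ i} (Fin n) ℝ)).mulVec z := by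
  rw [← Matrix.mulVec_mulVec]
  rfl

/-- Covariance structure of cross-validation residuals: for a centred random vector `Z`
with covariance `K` (symmetric positive definite), the residuals on folds `i` and `j`
satisfy `Cov(E_i, E_j) = (K⁻¹[i])⁻¹ K⁻¹[i,j] (K⁻¹[j])⁻¹` entrywise. -/
theorem cov_cvRes {n : ℕ} {Ω : Type*} [MeasurableSpace Ω] (μ : Measure Ω)
    [IsProbabilityMeasure μ]
    (K : Matrix (Fin n) (Fin n) ℝ) (hK : K.PosDef)
    (Z : Ω → Fin n → ℝ)
    (hmeas : ∀ a, Measurable fun ω => Z ω a)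
    (hmean : ∀ a, ∫ ω, Z ω a ∂μ = 0)
    (hint : ∀ a b, Integrable (fun ω => Z ω a * Z ω b) μ)
    (hcov : ∀ a b, ∫ ω, Z ω a * Z ω b ∂μ = K a b)
    (i j : Finset (Fin n)) (hi : i.Nonempty) (hiproper : i ≠ Finset.univ)
    (hj : j.Nonempty) (hjproper : j ≠ Finset.univ) :
    ∀ (a : {x // x ∈ i}) (b : {x // x ∈ j}),
      ∫ ω, cvRes K i (Z ω) a * cvRes K j (Z ω) b ∂μ =
        ((blk K⁻¹ i i)⁻¹ * blk K⁻¹ i j * (blk K⁻¹ j j)⁻¹) a b := by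
  intro a b
  have hKu : IsUnit K.det := isUnit_iff_ne_zero.2 hK.det_pos.ne'
  have hKT : Kᵀ = K := by simpa using hK.isHermitian.eq
  have hKinvT : K⁻¹ᵀ = K⁻¹ := by rw [Matrix.transpose_nonsing_inv, hKT]
  set P := (blk K⁻¹ i i)⁻¹ with hP
  set Q := (blk K⁻¹ j j)⁻¹ with hQ
  set A := P * (K⁻¹.submatrix Subtype.val id : Matrix {x // x ∈ i} (Fin n) ℝ) with hA
  set B := Q * (K⁻¹.submatrix Subtype.val id : Matrix {x // x ∈ j} (Fin n) ℝ) with hB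
  have hQT : Qᵀ = Q := by
    rw [hQ, Matrix.transpose_nonsing_inv]
    congr 1
    show (K⁻¹.submatrix Subtype.val Subtype.val)ᵀ = _
    rw [Matrix.transpose_submatrix, hKinvT]
    rfl
  have key : A * K * Bᵀ = P * blk K⁻¹ i j * Q := by
    have hBT : Bᵀ = (K⁻¹.submatrix id Subtype.val : Matrix (Fin n) {x // x ∈ j} ℝ) * Q := by
      rw [hB, Matrix.transpose_mul, Matrix.transpose_submatrix, hKinvT, hQT]
    rw [hA, hBT]
    have h1 : K⁻¹.submatrix (Subtype.val : {x // x ∈ i} → Fin n) id * K =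
        (K⁻¹ * K).submatrix Subtype.val id := by
      rw [Matrix.submatrix_mul K⁻¹ K (Subtype.val : {x // x ∈ i} → Fin n) id id
        Function.bijective_id]
      rfl
    have h2 : (K⁻¹ * K).submatrix (Subtype.val : {x // x ∈ i} → Fin n) id *
        K⁻¹.submatrix id (Subtype.val : {x // x ∈ j} → Fin n) =
        ((K⁻¹ * K) * K⁻¹).submatrix Subtype.val Subtype.val := by
      rw [Matrix.submatrix_mul (K⁻¹ * K) K⁻¹ (Subtype.val : {x // x ∈ i} → Fin n) id
        (Subtype.val : {x // x ∈ j} → Fin n) Function.bijective_id]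
    have h3 : K⁻¹.submatrix (Subtype.val : {x // x ∈ i} → Fin n) id * K *
        ((K⁻¹.submatrix id (Subtype.val : {x // x ∈ j} → Fin n) : Matrix (Fin n) {x // x ∈ j} ℝ) * Q) = blk K⁻¹ i j * Q := by
      rw [h1, ← Matrix.mul_assoc, h2, Matrix.nonsing_inv_mul K hKu, Matrix.one_mul]
      rfl
    rw [Matrix.mul_assoc P, Matrix.mul_assoc P, h3, ← Matrix.mul_assoc]
  calc ∫ ω, cvRes K i (Z ω) a * cvRes K j (Z ω) b ∂μ
      = ∫ ω, ∑ d, ∑ e, (A a d * B b e) * (Z ω d * Z ω e) ∂μ := by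
        congr 1; ext ω
        rw [cvRes_eq_mulVec, cvRes_eq_mulVec]
        show (∑ d, A a d * Z ω d) * (∑ e, B b e * Z ω e) = _
        rw [Finset.sum_mul_sum]
        exact Finset.sum_congr rfl fun d _ => Finset.sum_congr rfl fun e _ => by ring
    _ = ∑ d, ∑ e, (A a d * B b e) * K d e := by
        rw [MeasureTheory.integral_finset_sum _
          (fun d _ => integrable_finset_sum _ fun e _ => (hint d e).const_mul _)]
        refine Finset.sum_congr rfl fun d _ => ?_
        rw [MeasureTheory.integral_finset_sum _ fun e _ => (hint d e).const_mul _]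
        exact Finset.sum_congr rfl fun e _ => by rw [MeasureTheory.integral_const_mul, hcov]
    _ = (A * K * Bᵀ) a b := by
        simp only [Matrix.mul_apply, Matrix.transpose_apply, Finset.sum_mul, Finset.mul_sum]
        rw [Finset.sum_comm]
        exact Finset.sum_congr rfl fun e _ => Finset.sum_congr rfl fun d _ => by ring
    _ = (P * blk K⁻¹ i j * Q) a b := by rw [key]
end

section
/- Let K be n×n symmetric positive definite and let i₁,…,i_q be a partition of {1,…,n} whose concatenation (in order) is (1,…,n). Set D = blockdiag((K⁻¹[i₁])⁻¹, …, (K⁻¹[i_q])⁻¹). If Z ~ N(0,K), then the concatenated vector of cross-validation residuals E = (E_{i₁},…,E_{i_q}), where E_{i_j} = (K⁻¹[i_j])⁻¹(K⁻¹Z)_{i_j}, satisfies E = D K⁻¹ Z, and hence Cov(E) = D K⁻¹ D. -/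
open Matrix MeasureTheory

/-- The fold (element of the partition of `{1,…,n}`) containing the points mapped to `j`
by the fold-assignment function `g`. -/
def fold {n q : ℕ} (g : Fin n → Fin q) (j : Fin q) : Finset (Fin n) :=
  Finset.univ.filter (fun x => g x = j)

/-- The block-diagonal matrix `D = blockdiag((K⁻¹[i₁])⁻¹, …, (K⁻¹[i_q])⁻¹)` associated with
the partition into folds given by `g`, written entrywise. -/
noncomputable def blockD {n q : ℕ} (K : Matrix (Fin n) (Fin n) ℝ) (g : Fin n → Fin q) :
    Matrix (Fin n) (Fin n) ℝ :=
  fun a b =>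
    if h : g a = g b then
      ((blk K⁻¹ (fold g (g a)) (fold g (g a)))⁻¹)
        ⟨a, by simp [fold]⟩ ⟨b, by simp [fold, h]⟩
    else 0

/-- Concatenated vector of multiple-fold cross-validation residuals: the entry at `a` is
the component of `E_{i_j} = (K⁻¹[i_j])⁻¹ (K⁻¹ z)_{i_j}` corresponding to `a`,
where `i_j` is the fold containing `a`. -/
noncomputable def cvResAll {n q : ℕ} (K : Matrix (Fin n) (Fin n) ℝ) (g : Fin n → Fin q)
    (z : Fin n → ℝ) : Fin n → ℝ :=
  fun a =>
    ((blk K⁻¹ (fold g (g a)) (fold g (g a)))⁻¹).mulVec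
      (fun b => K⁻¹.mulVec z b.val) ⟨a, by simp [fold]⟩

lemma cvResAll_eq {n q : ℕ} (K : Matrix (Fin n) (Fin n) ℝ) (g : Fin n → Fin q)
    (z : Fin n → ℝ) : cvResAll K g z = (blockD K g * K⁻¹).mulVec z := by
  funext a
  rw [← mulVec_mulVec]
  show _ = ∑ c, blockD K g a c * K⁻¹.mulVec z c
  rw [show (Finset.univ : Finset (Fin n)) = Finset.univ from rfl]
  rw [← Finset.sum_subset (Finset.subset_univ (fold g (g a)))
    (fun c _ hc => by
      simp only [blockD]
      rw [dif_neg (fun h => hc (by simp [fold, h.symm]))]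
      ring)]
  rw [← Finset.sum_attach (fold g (g a)) (fun c => blockD K g a c * K⁻¹.mulVec z c)]
  show ∑ b : {x // x ∈ fold g (g a)}, _ * _ = _
  apply Finset.sum_congr rfl
  intro b _
  have hb : g a = g b.val := ((Finset.mem_filter.mp b.2).2).symm
  simp only [blockD, dif_pos hb]

lemma blk_congr {n : ℕ} (M : Matrix (Fin n) (Fin n) ℝ) {S T : Finset (Fin n)}
    (hST : S = T) {x y : Fin n} (hxS : x ∈ S) (hyS : y ∈ S) (hxT : x ∈ T) (hyT : y ∈ T) :
    (blk M S S)⁻¹ ⟨x, hxS⟩ ⟨y, hyS⟩ = (blk M T T)⁻¹ ⟨x, hxT⟩ ⟨y, hyT⟩ := by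
  subst hST; rfl

lemma blockD_symm {n q : ℕ} (K : Matrix (Fin n) (Fin n) ℝ) (hK : K.PosDef)
    (g : Fin n → Fin q) : (blockD K g)ᵀ = blockD K g := by
  have hKi : (K⁻¹)ᵀ = K⁻¹ := by
    rw [transpose_nonsing_inv]
    congr 1
    simpa using hK.isHermitian.eq
  have hblk : ∀ S : Finset (Fin n), ((blk K⁻¹ S S)⁻¹)ᵀ = (blk K⁻¹ S S)⁻¹ := by
    intro S
    rw [transpose_nonsing_inv]
    congr 1
    show (K⁻¹.submatrix _ _)ᵀ = _
    rw [transpose_submatrix, hKi]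
    rfl
  ext a b
  show blockD K g b a = blockD K g a b
  by_cases h : g a = g b
  · simp only [blockD, dif_pos h, dif_pos h.symm]
    rw [blk_congr K⁻¹ (show fold g (g b) = fold g (g a) by rw [h])
      (by simp [fold]) (by simp [fold, h]) (by simp [fold, ← h]) (by simp [fold])]
    conv_lhs => rw [← hblk (fold g (g a))]
    rfl
  · simp only [blockD, dif_neg h, dif_neg (Ne.symm h)]

/-- For a centred Gaussian-type vector `Z` with covariance `K`, the concatenated vector of
cross-validation residuals equals `D K⁻¹ Z`, and its covariance matrix is `D K⁻¹ D`. -/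
theorem cvResAll_eq_and_cov {n q : ℕ} {Ω : Type*} [MeasurableSpace Ω] (μ : Measure Ω)
    [IsProbabilityMeasure μ]
    (K : Matrix (Fin n) (Fin n) ℝ) (hK : K.PosDef) (g : Fin n → Fin q)
    (Z : Ω → Fin n → ℝ)
    (hmeas : ∀ a, Measurable fun ω => Z ω a)
    (hmean : ∀ a, ∫ ω, Z ω a ∂μ = 0)
    (hint : ∀ a b, Integrable (fun ω => Z ω a * Z ω b) μ)
    (hcov : ∀ a b, ∫ ω, Z ω a * Z ω b ∂μ = K a b) :
    (∀ ω, cvResAll K g (Z ω) = (blockD K g * K⁻¹).mulVec (Z ω)) ∧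
      (∀ a b, ∫ ω, cvResAll K g (Z ω) a * cvResAll K g (Z ω) b ∂μ =
        (blockD K g * K⁻¹ * blockD K g) a b) := by
  set M := blockD K g * K⁻¹ with hMdef
  have h1 : ∀ ω, cvResAll K g (Z ω) = M.mulVec (Z ω) := fun ω => cvResAll_eq K g (Z ω)
  refine ⟨h1, ?_⟩
  intro a b
  have hU : IsUnit K.det := isUnit_iff_ne_zero.mpr hK.det_pos.ne'
  have hKi : (K⁻¹)ᵀ = K⁻¹ := by
    rw [transpose_nonsing_inv]
    congr 1
    simpa using hK.isHermitian.eq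
  have heq : ∀ c d, (fun ω => M a c * Z ω c * (M b d * Z ω d)) =
      fun ω => M a c * M b d * (Z ω c * Z ω d) := by
    intro c d; funext ω; ring
  have hI : ∀ c d : Fin n, Integrable (fun ω => M a c * Z ω c * (M b d * Z ω d)) μ := by
    intro c d; rw [heq c d]; exact (hint c d).const_mul _
  calc ∫ ω, cvResAll K g (Z ω) a * cvResAll K g (Z ω) b ∂μ
      = ∫ ω, (∑ c, M a c * Z ω c) * (∑ d, M b d * Z ω d) ∂μ := by
        simp only [h1]; rfl
    _ = ∫ ω, ∑ c, ∑ d, M a c * Z ω c * (M b d * Z ω d) ∂μ := by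
        congr 1; funext ω; rw [Finset.sum_mul_sum]
    _ = ∑ c, ∑ d, ∫ ω, M a c * Z ω c * (M b d * Z ω d) ∂μ := by
        rw [integral_finset_sum _ (fun c _ => integrable_finset_sum _ (fun d _ => hI c d))]
        exact Finset.sum_congr rfl fun c _ => integral_finset_sum _ (fun d _ => hI c d)
    _ = ∑ c, ∑ d, M a c * M b d * K c d := by
        refine Finset.sum_congr rfl fun c _ => Finset.sum_congr rfl fun d _ => ?_
        rw [heq c d, integral_const_mul, hcov c d]
    _ = (M * K * Mᵀ) a b := by
        simp only [mul_apply, transpose_apply, Finset.sum_mul, Finset.mul_sum]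
        rw [Finset.sum_comm]
        exact Finset.sum_congr rfl fun c _ => Finset.sum_congr rfl fun d _ => by ring
    _ = (blockD K g * K⁻¹ * blockD K g) a b := by
        congr 1
        rw [hMdef, transpose_mul, hKi, blockD_symm K hK g, Matrix.mul_assoc,
          ← Matrix.mul_assoc K K⁻¹ (blockD K g), mul_nonsing_inv K hU, Matrix.one_mul]
end

section
/- Let R be an n×n symmetric positive definite correlation matrix and Z ~ N(0, σ²R). The leave-one-out scale estimator σ̂²_LOO := (1/n) Zᵀ R⁻¹ diag(R⁻¹)⁻¹ R⁻¹ Z is unbiased, E[σ̂²_LOO] = σ², and has variance Var(σ̂²_LOO) = (2σ⁴/n²) · tr((R⁻¹ diag(R⁻¹)⁻¹)²). -/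
open Matrix MeasureTheory ProbabilityTheory Real Filter
open scoped NNReal ENNReal

noncomputable def E (x : ℝ) : ℝ := Real.exp (-(x^2)/2)

lemma E_eq (x : ℝ) : E x = Real.exp (-(1/2) * x^2) := by rw [E]; ring_nf

lemma contE : Continuous E := by
  unfold E; continuity

lemma integrable_pow_mul_E (k : ℕ) : Integrable (fun x : ℝ => x ^ k * E x) := by
  have hb : (0:ℝ) < 1/2 := by norm_num
  have := integrable_rpow_mul_exp_neg_mul_sq hb (s := (k:ℝ)) (lt_of_lt_of_le (by norm_num) (Nat.cast_nonneg k))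
  simp_rw [Real.rpow_natCast] at this
  convert this using 2 with x
  rw [E_eq]

lemma I0 : ∫ x : ℝ, E x = Real.sqrt (2 * π) := by
  have := integral_gaussian (1/2)
  simp_rw [← E_eq] at this
  rw [this]
  rw [show (2:ℝ)*π = π/(1/2) by ring]

lemma I_odd (k : ℕ) (hk : Odd k) : ∫ x : ℝ, x ^ k * E x = 0 := by
  have h1 : ∫ x : ℝ, (-x) ^ k * E (-x) = ∫ x : ℝ, x ^ k * E x := by
    exact integral_neg_eq_self (fun x => x ^ k * E x) volume
  have h2 : ∀ x : ℝ, (-x) ^ k * E (-x) = -(x ^ k * E x) := by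
    intro x
    rw [hk.neg_pow, E, E]; ring_nf
  simp_rw [h2, integral_neg] at h1
  linarith

lemma hasDerivE (x : ℝ) : HasDerivAt E (-x * E x) x := by
  have h1 : HasDerivAt (fun x : ℝ => -(x^2)/2) (-x) x := by
    have := (hasDerivAt_pow 2 x).neg.div_const 2
    exact this.congr_deriv (by norm_num; ring)
  have := h1.exp
  exact this.congr_deriv (by rw [E]; ring)

lemma key_parts (k : ℕ) :
    ∫ x : ℝ, x ^ (k+2) * E x = (k + 1 : ℝ) * ∫ x : ℝ, x ^ k * E x := by
  set f : ℝ → ℝ := fun x => -(x ^ (k+1) * E x) with hf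
  have hderiv : ∀ x : ℝ, HasDerivAt f (x ^ (k+2) * E x - (k+1 : ℝ) * x ^ k * E x) x := by
    intro x
    have h := ((hasDerivAt_pow (k+1) x).mul (hasDerivE x)).neg
    exact h.congr_deriv (by simp only [Nat.add_sub_cancel]; push_cast; ring)
  have hintc : Integrable (fun x : ℝ => (k+1 : ℝ) * (x ^ k * E x)) :=
    (integrable_pow_mul_E k).const_mul _
  have hint : Integrable (fun x : ℝ => x ^ (k+2) * E x - (k+1 : ℝ) * x ^ k * E x) := by
    have := (integrable_pow_mul_E (k+2)).sub hintc
    simpa [mul_assoc, Pi.sub_def] using this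
  -- interval integral from -a to a equals f a - f (-a)
  have hIa : ∀ a : ℝ, ∫ x in (-a)..a, (x ^ (k+2) * E x - (k+1 : ℝ) * x ^ k * E x) = f a - f (-a) := by
    intro a
    exact intervalIntegral.integral_eq_sub_of_hasDerivAt (fun x _ => hderiv x)
      (hint.intervalIntegrable)
  have hlim1 : Tendsto (fun a : ℝ => ∫ x in (-a)..a, (x ^ (k+2) * E x - (k+1 : ℝ) * x ^ k * E x))
      atTop (nhds (∫ x : ℝ, (x ^ (k+2) * E x - (k+1 : ℝ) * x ^ k * E x))) :=
    intervalIntegral_tendsto_integral hint tendsto_neg_atTop_atBot tendsto_id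
  have htend0 : Tendsto (fun x : ℝ => x ^ (k+1) * E x) atTop (nhds 0) := by
    have hb : (0:ℝ) < 1/2 := by norm_num
    have h := rpow_mul_exp_neg_mul_sq_isLittleO_exp_neg hb ((k:ℝ)+1)
    have h2 : Tendsto (fun x : ℝ => Real.exp (-(1/2) * x)) atTop (nhds 0) := by
      have : Tendsto (fun x : ℝ => -(1/2) * x) atTop atBot :=
        (tendsto_const_mul_atBot_of_neg (by norm_num)).mpr tendsto_id
      exact Real.tendsto_exp_atBot.comp this
    have h3 := h.tendsto_zero_of_tendsto h2
    refine h3.congr' ?_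
    filter_upwards [eventually_ge_atTop (0:ℝ)] with x hx
    rw [show ((k:ℝ)+1) = ((k+1 : ℕ) : ℝ) by push_cast; ring, Real.rpow_natCast, E_eq]
  have htendf : Tendsto (fun a : ℝ => f a - f (-a)) atTop (nhds 0) := by
    have hneg : Tendsto (fun a : ℝ => (-a) ^ (k+1) * E (-a)) atTop (nhds 0) := by
      have heq : ∀ a : ℝ, (-a) ^ (k+1) * E (-a) = (-1)^(k+1) * (a ^ (k+1) * E a) := by
        intro a; rw [E, E, neg_pow]; ring_nf
      simp_rw [heq]
      simpa using htend0.const_mul ((-1:ℝ)^(k+1))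
    have := (htend0.neg.sub hneg.neg)
    simpa [hf] using this
  have heq0 : ∫ x : ℝ, (x ^ (k+2) * E x - (k+1 : ℝ) * x ^ k * E x) = 0 := by
    exact tendsto_nhds_unique (hlim1.congr (fun a => hIa a)) htendf
  have hsplit : ∫ x : ℝ, (x ^ (k+2) * E x - (k+1 : ℝ) * x ^ k * E x)
      = (∫ x : ℝ, x ^ (k+2) * E x) - (k+1 : ℝ) * ∫ x : ℝ, x ^ k * E x := by
    rw [show (fun x : ℝ => x ^ (k+2) * E x - (k+1 : ℝ) * x ^ k * E x)
        = fun x : ℝ => x ^ (k+2) * E x - (k+1 : ℝ) * (x ^ k * E x) by funext x; ring]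
    rw [integral_sub (integrable_pow_mul_E (k+2)) hintc, integral_const_mul]
  rw [hsplit] at heq0
  linarith

noncomputable def G (k : ℕ) : ℝ := ∫ x, x ^ k ∂(gaussianReal 0 1)

lemma G_def (k : ℕ) : ∫ x, x ^ k ∂(gaussianReal 0 1) = G k := rfl

lemma pdf_eq (x : ℝ) : gaussianPDFReal 0 1 x = (Real.sqrt (2 * π))⁻¹ * E x := by
  simp [gaussianPDFReal, E]

lemma gauss_eq_wd : gaussianReal 0 1 =
    volume.withDensity (fun x => ((Real.toNNReal (gaussianPDFReal 0 1 x) : ℝ≥0) : ℝ≥0∞)) := by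
  rw [gaussianReal_of_var_ne_zero 0 one_ne_zero]
  rfl

lemma meas_toNN : Measurable (fun x => (Real.toNNReal (gaussianPDFReal 0 1 x) : ℝ≥0)) :=
  (measurable_gaussianPDFReal 0 1).real_toNNReal

lemma integrable_gauss_iff (f : ℝ → ℝ) (hf : AEStronglyMeasurable f (volume : Measure ℝ)) :
    Integrable f (gaussianReal 0 1) ↔
      Integrable (fun x => f x * gaussianPDFReal 0 1 x) volume := by
  rw [gauss_eq_wd, integrable_withDensity_iff_integrable_smul₀ meas_toNN.aemeasurable]
  constructor <;> intro h <;> refine h.congr (Eventually.of_forall fun x => ?_) <;>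
    simp [NNReal.smul_def, Real.coe_toNNReal _ (gaussianPDFReal_nonneg 0 1 x), mul_comm]

lemma integral_gauss (f : ℝ → ℝ) :
    ∫ x, f x ∂(gaussianReal 0 1) = ∫ x, f x * gaussianPDFReal 0 1 x := by
  rw [gauss_eq_wd, integral_withDensity_eq_integral_smul₀ meas_toNN.aemeasurable]
  congr 1; funext x
  simp [NNReal.smul_def, Real.coe_toNNReal _ (gaussianPDFReal_nonneg 0 1 x), mul_comm]

lemma integrable_pow_gauss (k : ℕ) : Integrable (fun x => x ^ k) (gaussianReal 0 1) := by
  rw [integrable_gauss_iff _ (by fun_prop)]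
  refine ((integrable_pow_mul_E k).const_mul ((Real.sqrt (2 * π))⁻¹)).congr
    (Eventually.of_forall fun x => ?_)
  simp only [pdf_eq]; ring

lemma G_val (k : ℕ) : G k = (Real.sqrt (2 * π))⁻¹ * ∫ x : ℝ, x ^ k * E x := by
  rw [G, integral_gauss]
  simp_rw [pdf_eq]
  rw [← integral_const_mul]
  congr 1; funext x; ring

lemma sqrt2pi_pos : (0:ℝ) < Real.sqrt (2 * π) := Real.sqrt_pos.mpr (by positivity)

@[simp] lemma G0 : G 0 = 1 := by
  rw [G_val, show (fun x : ℝ => x ^ 0 * E x) = E by funext x; simp, I0]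
  field_simp

@[simp] lemma G1 : G 1 = 0 := by rw [G_val, I_odd 1 ⟨0, by norm_num⟩]; simp

@[simp] lemma G2 : G 2 = 1 := by
  have h := key_parts 0
  simp only [zero_add, Nat.cast_zero] at h
  rw [G_val, h]
  have : ∫ x : ℝ, x ^ 0 * E x = ∫ x : ℝ, E x := by congr 1; funext x; simp
  rw [this, I0]
  field_simp

@[simp] lemma G3 : G 3 = 0 := by rw [G_val, I_odd 3 ⟨1, by norm_num⟩]; simp

@[simp] lemma G4 : G 4 = 3 := by
  have h2 := key_parts 2
  have h0 := key_parts 0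
  simp only [zero_add, Nat.cast_zero] at h0
  norm_num at h2
  rw [G_val, h2, h0]
  have : ∫ x : ℝ, x ^ 0 * E x = ∫ x : ℝ, E x := by congr 1; funext x; simp
  rw [this, I0]
  have := sqrt2pi_pos
  field_simp

section Pi
variable {n : ℕ}

noncomputable abbrev μpi (n : ℕ) : Measure (Fin n → ℝ) := Measure.pi fun _ : Fin n => gaussianReal 0 1

lemma integrable_prod_pi (f : Fin n → ℝ → ℝ) (hf : ∀ i, Integrable (f i) (gaussianReal 0 1)) :
    Integrable (fun w : Fin n → ℝ => ∏ a, f a (w a)) (μpi n) := by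
  letI : MeasureSpace ℝ := ⟨gaussianReal 0 1⟩
  haveI : SigmaFinite (volume : Measure ℝ) :=
    (inferInstance : SigmaFinite (gaussianReal 0 1))
  exact Integrable.fintype_prod (f := f) hf

lemma integral_prod_pi (f : Fin n → ℝ → ℝ) :
    ∫ w, ∏ a, f a (w a) ∂(μpi n) = ∏ a, ∫ x, f a x ∂(gaussianReal 0 1) := by
  letI : MeasureSpace ℝ := ⟨gaussianReal 0 1⟩
  haveI : SigmaFinite (volume : Measure ℝ) :=
    (inferInstance : SigmaFinite (gaussianReal 0 1))
  exact MeasureTheory.integral_fintype_prod_eq_prod f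

end Pi

section Moments
variable {n : ℕ}

lemma if_pow (w : Fin n → ℝ) (i : Fin n) :
    ∏ a, (w a) ^ (if a = i then 1 else 0) = w i := by
  calc ∏ a, (w a) ^ (if a = i then 1 else 0) = ∏ a, if a = i then w a else 1 :=
        Finset.prod_congr rfl (fun a _ => by split <;> simp)
    _ = w i := by simp

lemma mono2 (w : Fin n → ℝ) (i j : Fin n) :
    w i * w j = ∏ a, (w a) ^ ((if a = i then 1 else 0) + (if a = j then 1 else 0)) := by
  simp_rw [pow_add, Finset.prod_mul_distrib, if_pow]

lemma mono4 (w : Fin n → ℝ) (i j k l : Fin n) :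
    w i * w j * (w k * w l) = ∏ a, (w a) ^
      ((if a = i then 1 else 0) + (if a = j then 1 else 0)
        + (if a = k then 1 else 0) + (if a = l then 1 else 0)) := by
  simp_rw [pow_add, Finset.prod_mul_distrib, if_pow]
  ring

lemma integrable_mono2 (i j : Fin n) :
    Integrable (fun w : Fin n → ℝ => w i * w j) (μpi n) := by
  simp_rw [mono2 _ i j]
  exact integrable_prod_pi _ (fun a => integrable_pow_gauss _)

lemma integrable_mono4 (i j k l : Fin n) :
    Integrable (fun w : Fin n → ℝ => w i * w j * (w k * w l)) (μpi n) := by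
  simp_rw [mono4 _ i j k l]
  exact integrable_prod_pi _ (fun a => integrable_pow_gauss _)

lemma prodG_zero {c : Fin n → ℕ} (x : Fin n) (hx : c x = 1 ∨ c x = 3) :
    ∏ a, G (c a) = 0 :=
  Finset.prod_eq_zero (Finset.mem_univ x) (by rcases hx with h | h <;> rw [h] <;> simp)

lemma prodG_one {c : Fin n → ℕ} (hc : ∀ a, c a = 0 ∨ c a = 2) :
    ∏ a, G (c a) = 1 :=
  Finset.prod_eq_one (fun a _ => by rcases hc a with h | h <;> rw [h] <;> simp)

lemma prodG_three {c : Fin n → ℕ} (x : Fin n) (hx : c x = 4)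
    (ho : ∀ a, a ≠ x → c a = 0) :
    ∏ a, G (c a) = 3 := by
  rw [Finset.prod_eq_single x (fun a _ ha => by rw [ho a ha]; simp) (by simp)]
  rw [hx]; simp

lemma integral_mono2 (i j : Fin n) :
    ∫ w, w i * w j ∂(μpi n) = if i = j then 1 else 0 := by
  simp_rw [mono2 _ i j]
  rw [integral_prod_pi (fun a x => x ^ ((if a = i then 1 else 0) + (if a = j then 1 else 0)))]
  simp only [G_def]
  rcases eq_or_ne i j with h | h
  · subst h
    simp only [if_pos rfl]
    exact prodG_one (fun a => by by_cases ha : a = i <;> simp [ha])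
  · rw [if_neg h]
    exact prodG_zero i (Or.inl (by simp [h]))

lemma integral_mono4 (i j k l : Fin n) :
    ∫ w, w i * w j * (w k * w l) ∂(μpi n) =
      (if i = j then (1:ℝ) else 0) * (if k = l then 1 else 0)
      + (if i = k then (1:ℝ) else 0) * (if j = l then 1 else 0)
      + (if i = l then (1:ℝ) else 0) * (if j = k then 1 else 0) := by
  simp_rw [mono4 _ i j k l]
  rw [integral_prod_pi (fun a x => x ^
      ((if a = i then 1 else 0) + (if a = j then 1 else 0)
        + (if a = k then 1 else 0) + (if a = l then 1 else 0)))]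
  simp only [G_def]
  rcases eq_or_ne i j with hij | hij
  · subst hij
    rcases eq_or_ne k l with hkl | hkl
    · subst hkl
      rcases eq_or_ne i k with hik | hik
      · subst hik
        rw [prodG_three i (by simp) (fun a ha => by simp [ha])]
        norm_num
      · rw [prodG_one (fun a => by
          by_cases h1 : a = i
          · subst h1; simp [hik]
          · by_cases h2 : a = k <;> simp [h1, h2, Ne.symm hik])]
        simp [hik]
    · rcases eq_or_ne i k with hik | hik
      · subst hik
        have hil : i ≠ l := fun h => hkl (h ▸ rfl)
        rw [prodG_zero l (Or.inl (by simp [Ne.symm hkl, Ne.symm hil]))]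
        simp [hkl, Ne.symm hil, hil]
      · rcases eq_or_ne i l with hil | hil
        · subst hil
          have : i ≠ k := hik
          rw [prodG_zero k (Or.inl (by simp [Ne.symm hik, hkl]))]
          simp [hik, hkl, Ne.symm hkl]
        · rw [prodG_zero k (Or.inl (by simp [Ne.symm hik, hkl]))]
          simp [hik, hil, hkl]
  · rcases eq_or_ne i k with hik | hik
    · subst hik
      rcases eq_or_ne j l with hjl | hjl
      · subst hjl
        rw [prodG_one (fun a => by
          by_cases h1 : a = i
          · subst h1; simp [hij]
          · by_cases h2 : a = j <;> simp [h1, h2, Ne.symm hij])]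
        simp [hij, Ne.symm hij]
      · rcases eq_or_ne i l with hil | hil
        · subst hil
          rw [prodG_zero j (Or.inl (by simp [Ne.symm hij]))]
          simp [hij, hjl, Ne.symm hij]
        · rw [prodG_zero j (Or.inl (by simp [Ne.symm hij, hjl]))]
          simp [hij, hjl, hil]
    · rcases eq_or_ne i l with hil | hil
      · subst hil
        rcases eq_or_ne j k with hjk | hjk
        · subst hjk
          rw [prodG_one (fun a => by
            by_cases h1 : a = i
            · subst h1; simp [hij]
            · by_cases h2 : a = j <;> simp [h1, h2, Ne.symm hij])]
          simp [hij, hik, Ne.symm hik]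
        · rw [prodG_zero j (Or.inl (by simp [Ne.symm hij, hjk]))]
          simp [hij, hik, hjk]
      · rw [prodG_zero i (Or.inl (by simp [hij, hik, hil]))]
        simp [hij, hik, hil]

end Moments

section QF
variable {n : ℕ} (N : Matrix (Fin n) (Fin n) ℝ)

lemma qf_expand (w : Fin n → ℝ) :
    w ⬝ᵥ N.mulVec w = ∑ i, ∑ j, N i j * (w i * w j) := by
  simp only [dotProduct, mulVec, Finset.mul_sum]
  exact Finset.sum_congr rfl fun i _ => Finset.sum_congr rfl fun j _ => by ring

lemma integrable_qf : Integrable (fun w : Fin n → ℝ => w ⬝ᵥ N.mulVec w) (μpi n) := by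
  simp_rw [qf_expand]
  exact integrable_finset_sum _ fun i _ => integrable_finset_sum _ fun j _ =>
    (integrable_mono2 i j).const_mul _

lemma integrable_qf_sq : Integrable (fun w : Fin n → ℝ => (w ⬝ᵥ N.mulVec w) ^ 2) (μpi n) := by
  have : ∀ w : Fin n → ℝ, (w ⬝ᵥ N.mulVec w) ^ 2
      = ∑ i, ∑ j, ∑ k, ∑ l, (N i j * N k l) * (w i * w j * (w k * w l)) := by
    intro w
    rw [qf_expand, sq]
    have hinner : ∀ i j : Fin n, ∑ k, ∑ l, (N i j * N k l) * (w i * w j * (w k * w l))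
        = (N i j * (w i * w j)) * ∑ k, ∑ l, N k l * (w k * w l) := by
      intro i j
      rw [Finset.mul_sum]
      refine Finset.sum_congr rfl fun k _ => ?_
      rw [Finset.mul_sum]
      exact Finset.sum_congr rfl fun l _ => by ring
    simp_rw [hinner, ← Finset.sum_mul]
  simp_rw [this]
  exact integrable_finset_sum _ fun i _ => integrable_finset_sum _ fun j _ =>
    integrable_finset_sum _ fun k _ => integrable_finset_sum _ fun l _ =>
      (integrable_mono4 i j k l).const_mul _

lemma integral_qf : ∫ w, w ⬝ᵥ N.mulVec w ∂(μpi n) = N.trace := by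
  simp_rw [qf_expand]
  rw [integral_finset_sum _ fun i _ => integrable_finset_sum _ fun j _ =>
    (integrable_mono2 i j).const_mul (N i j)]
  have : ∀ i : Fin n, (∫ w, ∑ j, N i j * (w i * w j) ∂(μpi n)) = N i i := by
    intro i
    rw [integral_finset_sum _ fun j _ => (integrable_mono2 i j).const_mul _]
    have : ∀ j : Fin n, (∫ w, N i j * (w i * w j) ∂(μpi n)) = if i = j then N i j else 0 := by
      intro j
      rw [integral_const_mul, integral_mono2]
      split <;> simp
    simp_rw [this]
    simp
  simp_rw [this]
  rfl

lemma integral_qf_sq :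
    ∫ w, (w ⬝ᵥ N.mulVec w) ^ 2 ∂(μpi n)
      = N.trace ^ 2 + (N * Nᵀ).trace + (N * N).trace := by
  have hexp : ∀ w : Fin n → ℝ, (w ⬝ᵥ N.mulVec w) ^ 2
      = ∑ i, ∑ j, ∑ k, ∑ l, (N i j * N k l) * (w i * w j * (w k * w l)) := by
    intro w
    rw [qf_expand, sq]
    have hinner : ∀ i j : Fin n, ∑ k, ∑ l, (N i j * N k l) * (w i * w j * (w k * w l))
        = (N i j * (w i * w j)) * ∑ k, ∑ l, N k l * (w k * w l) := by
      intro i j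
      rw [Finset.mul_sum]
      refine Finset.sum_congr rfl fun k _ => ?_
      rw [Finset.mul_sum]
      exact Finset.sum_congr rfl fun l _ => by ring
    simp_rw [hinner, ← Finset.sum_mul]
  simp_rw [hexp]
  rw [integral_finset_sum _ fun i _ => integrable_finset_sum _ fun j _ =>
    integrable_finset_sum _ fun k _ => integrable_finset_sum _ fun l _ =>
      (integrable_mono4 i j k l).const_mul _]
  have h1 : ∀ i, (∫ w, ∑ j, ∑ k, ∑ l, (N i j * N k l) * (w i * w j * (w k * w l)) ∂(μpi n))
      = ∑ j, ∑ k, ∑ l, (N i j * N k l) *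
        ((if i = j then (1:ℝ) else 0) * (if k = l then 1 else 0)
          + (if i = k then (1:ℝ) else 0) * (if j = l then 1 else 0)
          + (if i = l then (1:ℝ) else 0) * (if j = k then 1 else 0)) := by
    intro i
    rw [integral_finset_sum _ fun j _ => integrable_finset_sum _ fun k _ =>
      integrable_finset_sum _ fun l _ => (integrable_mono4 i j k l).const_mul _]
    refine Finset.sum_congr rfl fun j _ => ?_
    rw [integral_finset_sum _ fun k _ => integrable_finset_sum _ fun l _ =>
      (integrable_mono4 i j k l).const_mul _]
    refine Finset.sum_congr rfl fun k _ => ?_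
    rw [integral_finset_sum _ fun l _ => (integrable_mono4 i j k l).const_mul _]
    refine Finset.sum_congr rfl fun l _ => ?_
    rw [integral_const_mul, integral_mono4]
  simp_rw [h1]
  have expand : ∀ i j k l : Fin n, (N i j * N k l) *
        ((if i = j then (1:ℝ) else 0) * (if k = l then 1 else 0)
          + (if i = k then (1:ℝ) else 0) * (if j = l then 1 else 0)
          + (if i = l then (1:ℝ) else 0) * (if j = k then 1 else 0))
      = (if i = j then (if k = l then N i j * N k l else 0) else 0)
        + (if i = k then (if j = l then N i j * N k l else 0) else 0)
        + (if i = l then (if j = k then N i j * N k l else 0) else 0) := by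
    intro i j k l
    split_ifs <;> ring
  simp_rw [expand, Finset.sum_add_distrib]
  congr 1
  · congr 1
    · -- δij δkl term
      have : ∀ i j k : Fin n, (∑ l, if i = j then (if k = l then N i j * N k l else 0) else 0)
          = if i = j then N i j * N k k else 0 := by
        intro i j k
        split_ifs with h
        · simp
        · simp
      simp_rw [this]
      have : ∀ i j : Fin n, (∑ k, if i = j then N i j * N k k else 0)
          = if i = j then N i j * N.trace else 0 := by
        intro i j
        split_ifs with h <;> simp [Matrix.trace, Matrix.diag, Finset.mul_sum]
      simp_rw [this]
      have : ∀ i : Fin n, (∑ j, if i = j then N i j * N.trace else 0) = N i i * N.trace := by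
        intro i
        simp
      simp_rw [this]
      rw [sq, ← Finset.sum_mul]
      rfl
    · -- δik δjl term
      have : ∀ i j k : Fin n, (∑ l, if i = k then (if j = l then N i j * N k l else 0) else 0)
          = if i = k then N i j * N k j else 0 := by
        intro i j k
        split_ifs with h <;> simp
      simp_rw [this]
      have : ∀ i j : Fin n, (∑ k, if i = k then N i j * N k j else 0) = N i j * N i j := by
        intro i j; simp
      simp_rw [this]
      rw [Matrix.trace]
      simp [Matrix.diag, Matrix.mul_apply, Matrix.transpose_apply]
  · -- δil δjk term
    have : ∀ i j k : Fin n, (∑ l, if i = l then (if j = k then N i j * N k l else 0) else 0)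
        = if j = k then N i j * N k i else 0 := by
      intro i j k
      rcases eq_or_ne j k with h | h <;> simp [h]
    simp_rw [this]
    have : ∀ i j : Fin n, (∑ k, if j = k then N i j * N k i else 0) = N i j * N j i := by
      intro i j; simp
    simp_rw [this]
    rw [Matrix.trace]
    simp [Matrix.diag, Matrix.mul_apply]

end QF

lemma dot_sandwich {n : ℕ} (S M : Matrix (Fin n) (Fin n) ℝ) (w : Fin n → ℝ) :
    (S.mulVec w) ⬝ᵥ M.mulVec (S.mulVec w) = w ⬝ᵥ (Sᵀ * M * S).mulVec w := by
  rw [← Matrix.mulVec_mulVec, ← Matrix.mulVec_mulVec,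
    Matrix.dotProduct_mulVec w Sᵀ, Matrix.vecMul_transpose]

lemma posdef_diag_pos {n : ℕ} {M : Matrix (Fin n) (Fin n) ℝ} (hM : M.PosDef) (i : Fin n) :
    0 < M i i := by
  have hne : (Pi.single i (1:ℝ) : Fin n → ℝ) ≠ 0 := by
    intro h
    have := congrFun h i
    simp at this
  exact hM.diag_pos

/-- Leave-one-out scale estimator of Bachoc (2013):
with `Z = σ S w ~ N(0, σ² R)` for standard Gaussian `w` and `S Sᵀ = R`, the estimator
`σ̂²_LOO = (1/n) Zᵀ R⁻¹ diag(R⁻¹)⁻¹ R⁻¹ Z` is unbiased with variance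
`(2σ⁴/n²) tr((R⁻¹ diag(R⁻¹)⁻¹)²)`. -/
theorem loo_scale_estimator_mean_var {n : ℕ} (hn : 0 < n)
    (R : Matrix (Fin n) (Fin n) ℝ) (hR : R.PosDef) (hcorr : ∀ a, R a a = 1)
    (S : Matrix (Fin n) (Fin n) ℝ) (hS : S * Sᵀ = R)
    (σ : ℝ) (hσ : 0 < σ) :
    (∫ w, (1 / (n : ℝ)) *
          ((σ • S.mulVec w) ⬝ᵥ
            (R⁻¹ * (Matrix.diagonal fun a => R⁻¹ a a)⁻¹ * R⁻¹).mulVec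
              (σ • S.mulVec w))
        ∂(Measure.pi fun _ : Fin n => gaussianReal 0 1) = σ ^ 2) ∧
    (∫ w, ((1 / (n : ℝ)) *
          ((σ • S.mulVec w) ⬝ᵥ
            (R⁻¹ * (Matrix.diagonal fun a => R⁻¹ a a)⁻¹ * R⁻¹).mulVec
              (σ • S.mulVec w)) - σ ^ 2) ^ 2
        ∂(Measure.pi fun _ : Fin n => gaussianReal 0 1) =
      2 * σ ^ 4 / (n : ℝ) ^ 2 *
        ((R⁻¹ * (Matrix.diagonal fun a => R⁻¹ a a)⁻¹) *
          (R⁻¹ * (Matrix.diagonal fun a => R⁻¹ a a)⁻¹)).trace) := by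
  have hdet : IsUnit R.det := hR.det_pos.ne'.isUnit
  have hRi : (R⁻¹).PosDef := hR.inv
  have hd : ∀ a, 0 < R⁻¹ a a := fun a => posdef_diag_pos hRi a
  set D : Matrix (Fin n) (Fin n) ℝ := Matrix.diagonal fun a => R⁻¹ a a with hD
  have hDinv : D⁻¹ = Matrix.diagonal fun a => (R⁻¹ a a)⁻¹ := by
    apply Matrix.inv_eq_right_inv
    rw [hD, Matrix.diagonal_mul_diagonal]
    rw [show (fun a => R⁻¹ a a * (R⁻¹ a a)⁻¹) = fun _ => (1:ℝ) from
      funext fun a => mul_inv_cancel₀ (hd a).ne']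
    exact Matrix.diagonal_one
  set A : Matrix (Fin n) (Fin n) ℝ := R⁻¹ * D⁻¹ * R⁻¹ with hA
  set N : Matrix (Fin n) (Fin n) ℝ := Sᵀ * A * S with hN
  -- pointwise identity
  have hptwise : ∀ w : Fin n → ℝ,
      (σ • S.mulVec w) ⬝ᵥ A.mulVec (σ • S.mulVec w) = σ ^ 2 * (w ⬝ᵥ N.mulVec w) := by
    intro w
    rw [Matrix.mulVec_smul, smul_dotProduct, dotProduct_smul]
    have hq : (S.mulVec w) ⬝ᵥ A.mulVec (S.mulVec w) = w ⬝ᵥ N.mulVec w := by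
      rw [hN]; exact dot_sandwich S A w
    rw [hq, smul_eq_mul, smul_eq_mul]
    ring
  -- A * R
  have hAR : A * R = R⁻¹ * D⁻¹ := by
    rw [hA, Matrix.mul_assoc (R⁻¹ * D⁻¹) R⁻¹ R, Matrix.nonsing_inv_mul R hdet, Matrix.mul_one]
  -- trace of N
  have htrace : N.trace = n := by
    have h1 : N.trace = (A * R).trace := by
      rw [hN, Matrix.mul_assoc, Matrix.trace_mul_comm, Matrix.mul_assoc, hS]
    rw [h1, hAR, hDinv, Matrix.trace]
    have : ∀ a : Fin n, (R⁻¹ * Matrix.diagonal fun a => (R⁻¹ a a)⁻¹).diag a = 1 := by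
      intro a
      rw [Matrix.diag]
      rw [Matrix.mul_diagonal]
      exact mul_inv_cancel₀ (hd a).ne'
    simp_rw [this]
    simp
  -- trace of N * N
  have htrN2 : (N * N).trace = ((R⁻¹ * D⁻¹) * (R⁻¹ * D⁻¹)).trace := by
    have e1 : N * N = Sᵀ * (A * S * (Sᵀ * (A * S))) := by
      rw [hN]; simp only [Matrix.mul_assoc]
    have e2 : A * S * (Sᵀ * (A * S)) * Sᵀ = (A * R) * (A * R) := by
      simp only [← hS, Matrix.mul_assoc]
    rw [e1, Matrix.trace_mul_comm, e2, hAR]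
  -- symmetry of N
  have hRT : Rᵀ = R := by
    have := hR.1
    simpa using this.eq
  have hRiT : (R⁻¹)ᵀ = R⁻¹ := by rw [Matrix.transpose_nonsing_inv, hRT]
  have hDT : (D⁻¹)ᵀ = D⁻¹ := by
    rw [hDinv, Matrix.diagonal_transpose]
  have hNT : Nᵀ = N := by
    rw [hN, hA]
    simp only [Matrix.transpose_mul, Matrix.transpose_transpose, hRiT, hDT]
    simp only [Matrix.mul_assoc]
  -- first moment
  have part1 : ∫ w, (1 / (n : ℝ)) *
      ((σ • S.mulVec w) ⬝ᵥ A.mulVec (σ • S.mulVec w)) ∂(μpi n) = σ ^ 2 := by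
    simp_rw [hptwise]
    rw [integral_const_mul, integral_const_mul, integral_qf, htrace]
    field_simp
  have hnne : (n : ℝ) ≠ 0 := Nat.cast_ne_zero.mpr hn.ne'
  have part2 : ∫ w, ((1 / (n : ℝ)) *
      ((σ • S.mulVec w) ⬝ᵥ A.mulVec (σ • S.mulVec w)) - σ ^ 2) ^ 2 ∂(μpi n)
      = 2 * σ ^ 4 / (n : ℝ) ^ 2 * ((R⁻¹ * D⁻¹) * (R⁻¹ * D⁻¹)).trace := by
    set c : ℝ := σ ^ 2 / n with hc
    have hpt2 : ∀ w : Fin n → ℝ,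
        ((1 / (n : ℝ)) * ((σ • S.mulVec w) ⬝ᵥ A.mulVec (σ • S.mulVec w)) - σ ^ 2) ^ 2
        = c ^ 2 * (w ⬝ᵥ N.mulVec w) ^ 2 - (2 * c * σ ^ 2) * (w ⬝ᵥ N.mulVec w) + σ ^ 4 := by
      intro w
      rw [hptwise w, hc]
      field_simp
      ring
    simp_rw [hpt2]
    have hi1 : Integrable (fun w : Fin n → ℝ => c ^ 2 * (w ⬝ᵥ N.mulVec w) ^ 2) (μpi n) :=
      (integrable_qf_sq N).const_mul _
    have hi2 : Integrable (fun w : Fin n → ℝ => 2 * c * σ ^ 2 * (w ⬝ᵥ N.mulVec w)) (μpi n) :=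
      (integrable_qf N).const_mul _
    have hi3 : Integrable (fun w : Fin n → ℝ =>
        c ^ 2 * (w ⬝ᵥ N.mulVec w) ^ 2 - 2 * c * σ ^ 2 * (w ⬝ᵥ N.mulVec w)) (μpi n) :=
      hi1.sub hi2
    rw [integral_add hi3 (integrable_const _), integral_sub hi1 hi2]
    rw [integral_const_mul, integral_const_mul, integral_qf, integral_qf_sq, htrace, hNT, htrN2]
    rw [integral_const]
    simp only [measure_univ, probReal_univ, ENNReal.toReal_one, smul_eq_mul, one_mul]
    rw [hc]
    field_simp
    ring
  exact ⟨part1, part2⟩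
end
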